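/- arXiv:2509.24839 — 3 statements merged into one kernel-verified Lean document; each statement's English description precedes it below -/
import Mathlib

section
/- For even n, the 𝔽₂-span Γ_n of the functions γ_{2k}, k ≥ 0, is an n-dimensional vector space over 𝔽₂ with basis {γ_0, γ_2, …, γ_{2n-2}}. -/
open Finset Polynomial

/-- The cyclic left shift on `𝔽₂ⁿ`. -/
def cshift (n : ℕ) (x : Fin n → ZMod 2) : Fin n → ZMod 2 :=
  fun i => x ⟨(i.val + 1) % n, Nat.mod_lt _ (Nat.lt_of_le_of_lt (Nat.zero_le i.val) i.isLt)⟩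

/-- `gamma n k` is the function `γ_{2k} = S^{2k} ⊙ (𝟙+S^{2k-1}) ⊙ … ⊙ (𝟙+S)` on `𝔽₂ⁿ`;
`gamma n 0 = id`. -/
def gamma (n k : ℕ) (x : Fin n → ZMod 2) : Fin n → ZMod 2 :=
  fun i => (cshift n)^[2 * k] x i * ∏ j ∈ Finset.range k, (1 + (cshift n)^[2 * j + 1] x i)

/-!
Write `n = 2m`, positions being read mod `n`. The factors `𝟙 + S^{2j+1} x` depend only on
`j mod m`, and a product in `𝔽₂` is determined by whether some factor vanishes, so once `k ≥ m` the
product over `j < k` no longer changes and `γ_{2(k+m)} = γ_{2k}`; hence `γ_0, …, γ_{2n-2}` span `Γ_n`. They are independent: at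
coordinate `0`, the input `e_{2r} + e_{2r+1}` (`r < m`) is detected by `γ_{2r}` alone, and `e_{2r}`
exactly by `γ_{2r}` and `γ_{2(m+r)}`.
-/

theorem ZMod.two_eq_iff_eq_zero_iff {a b : ZMod 2} : a = b ↔ (a = 0 ↔ b = 0) := by
  revert a b; decide

theorem ZMod.two_prod_range_eq_of_periodic {f : ℕ → ZMod 2} {m k l : ℕ}
    (hf : Function.Periodic f m) (hm : 0 < m) (hk : m ≤ k) (hl : m ≤ l) :
    ∏ j ∈ range k, f j = ∏ j ∈ range l, f j := by
  have hzero : ∀ {k}, m ≤ k → ((∏ j ∈ range k, f j) = 0 ↔ ∃ j < m, f j = 0) := by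
    intro k hk
    simp only [prod_eq_zero_iff, mem_range]
    refine ⟨fun ⟨j, _, hj⟩ => ⟨j % m, Nat.mod_lt j hm, by rwa [hf.map_mod_nat]⟩,
      fun ⟨j, hj, hj0⟩ => ⟨j, hj.trans_le hk, hj0⟩⟩
  rw [ZMod.two_eq_iff_eq_zero_iff, hzero hk, hzero hl]

theorem cshift_iterate_apply {n : ℕ} (hn : 0 < n) (a : ℕ) (x : Fin n → ZMod 2) (i : Fin n) :
    (cshift n)^[a] x i = x ⟨(i + a) % n, Nat.mod_lt _ hn⟩ := by
  induction a generalizing x with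
  | zero => simp [Nat.mod_eq_of_lt i.isLt]
  | succ a ih =>
    rw [Function.iterate_succ_apply, ih, cshift]
    congr 2
    rw [Nat.mod_add_mod, Nat.add_assoc]

theorem gamma_apply {n : ℕ} (hn : 0 < n) (k : ℕ) (x : Fin n → ZMod 2) (i : Fin n) :
    gamma n k x i = x ⟨(i + 2 * k) % n, Nat.mod_lt _ hn⟩ *
      ∏ j ∈ range k, (1 + x ⟨(i + (2 * j + 1)) % n, Nat.mod_lt _ hn⟩) := by
  simp only [gamma, cshift_iterate_apply hn]

theorem gamma_add_half {m k : ℕ} (hk : m ≤ k) : gamma (m + m) (k + m) = gamma (m + m) k := by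
  rcases Nat.eq_zero_or_pos m with rfl | hm
  · rfl
  have hn : 0 < m + m := by omega
  funext x i
  rw [gamma_apply hn, gamma_apply hn]
  have hshift : ∀ a b, (a + 2 * (b + m)) % (m + m) = (a + 2 * b) % (m + m) := fun a b => by
    rw [show a + 2 * (b + m) = a + 2 * b + (m + m) by ring, Nat.add_mod_right]
  congr 1
  · exact congrArg x (Fin.ext (hshift i k))
  · refine ZMod.two_prod_range_eq_of_periodic (fun j => ?_) hm (by omega) hk
    simp only [show i + (2 * (j + m) + 1) = i + 1 + 2 * (j + m) by ring,
      show i + (2 * j + 1) = i + 1 + 2 * j by ring, hshift]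

theorem span_gamma_fin_eq_span_gamma (m : ℕ) :
    Submodule.span (ZMod 2) (Set.range fun k : Fin (m + m) => gamma (m + m) k) =
      Submodule.span (ZMod 2) (Set.range fun k : ℕ => gamma (m + m) k) := by
  refine le_antisymm (Submodule.span_mono (Set.range_subset_iff.2 fun k => ⟨k, rfl⟩))
    (Submodule.span_le.2 (Set.range_subset_iff.2 fun k => ?_))
  induction k using Nat.strong_induction_on with
  | _ k ih =>
    by_cases hk : k < m + m
    · exact Submodule.subset_span ⟨⟨k, hk⟩, rfl⟩
    rcases Nat.eq_zero_or_pos m with rfl | hm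
    · exact Subsingleton.elim (gamma 0 k) 0 ▸ Submodule.zero_mem _
    obtain ⟨l, rfl⟩ : ∃ l, k = l + m := ⟨k - m, by omega⟩
    rw [gamma_add_half (by omega)]
    exact ih l (by omega)

theorem gamma_apply_zero_pair {m r : ℕ} (k : ℕ) (hr : r < m) :
    gamma (m + m) k (fun j => if j.val = 2 * r ∨ j.val = 2 * r + 1 then 1 else 0)
      ⟨0, by omega⟩ = if k = r then 1 else 0 := by
  rw [gamma_apply (by omega)]
  simp only [Nat.zero_add]
  rcases lt_trichotomy k r with h | rfl | h
  · rw [Nat.mod_eq_of_lt (by omega), if_neg (by omega), if_neg (by omega), zero_mul]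
  · rw [Nat.mod_eq_of_lt (by omega), if_pos (by omega), if_pos rfl, one_mul]
    refine prod_eq_one fun j hj => ?_
    have := mem_range.1 hj
    rw [Nat.mod_eq_of_lt (by omega), if_neg (by omega), add_zero]
  · rw [prod_eq_zero (mem_range.2 h) (by rw [Nat.mod_eq_of_lt (by omega), if_pos (by omega)]; rfl),
      mul_zero, if_neg (by omega)]

theorem gamma_apply_zero_single {m r : ℕ} (k : ℕ) (hr : r < m) :
    gamma (m + m) k (fun j => if j.val = 2 * r then 1 else 0) ⟨0, by omega⟩ =
      if k % m = r then 1 else 0 := by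
  rw [gamma_apply (by omega)]
  simp only [Nat.zero_add, ← two_mul, Nat.mul_mod_mul_left, Nat.mul_left_cancel_iff two_pos]
  rw [prod_eq_one, mul_one]
  intro j _
  rw [if_neg, add_zero]
  intro h
  -- `(2j + 1) mod 2m` is odd
  have := congrArg (· % 2) h
  simp [Nat.mod_mod_of_dvd _ (dvd_mul_right 2 m), Nat.add_mod] at this

theorem linearIndependent_gamma (m : ℕ) :
    LinearIndependent (ZMod 2) (fun k : Fin (m + m) => gamma (m + m) k) := by
  rw [Fintype.linearIndependent_iff]
  intro g hg
  have hsum : ∀ x i, ∑ k : Fin (m + m), g k * gamma (m + m) k x i = 0 := fun x i => by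
    simpa using congrFun (congrFun hg x) i
  have hlow : ∀ r : Fin m, g (Fin.castAdd m r) = 0 := by
    intro r
    have h := hsum (fun j => if j.val = 2 * r ∨ j.val = 2 * r + 1 then 1 else 0)
      ⟨0, by have := r.isLt; omega⟩
    simp only [gamma_apply_zero_pair _ r.isLt, Fin.sum_univ_add, Fin.val_castAdd, Fin.val_natAdd,
      mul_ite, mul_one, mul_zero] at h
    have hhalf : ∀ k : Fin m, m + k ≠ r := fun k => by omega
    simpa [Fin.val_inj, hhalf] using h
  have hhigh : ∀ r : Fin m, g (Fin.natAdd m r) = 0 := by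
    intro r
    have h := hsum (fun j => if j.val = 2 * r then 1 else 0) ⟨0, by have := r.isLt; omega⟩
    simp only [gamma_apply_zero_single _ r.isLt, Fin.sum_univ_add, Fin.val_castAdd, Fin.val_natAdd,
      mul_ite, mul_one, mul_zero] at h
    simpa [Nat.mod_eq_of_lt, Fin.val_inj, hlow] using h
  exact fun k => Fin.addCases hlow hhigh k

theorem stmt_3 (n : ℕ) (hn : Even n) :
    LinearIndependent (ZMod 2)
      (fun k : Fin n => (gamma n k : (Fin n → ZMod 2) → (Fin n → ZMod 2))) ∧
    Submodule.span (ZMod 2)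
        (Set.range fun k : Fin n => (gamma n k : (Fin n → ZMod 2) → (Fin n → ZMod 2))) =
      Submodule.span (ZMod 2)
        (Set.range fun k : ℕ => (gamma n k : (Fin n → ZMod 2) → (Fin n → ZMod 2))) ∧
    Module.finrank (ZMod 2)
        (Submodule.span (ZMod 2)
          (Set.range fun k : ℕ => (gamma n k : (Fin n → ZMod 2) → (Fin n → ZMod 2)))) = n := by
  obtain ⟨m, rfl⟩ := hn
  refine ⟨linearIndependent_gamma m, span_gamma_fin_eq_span_gamma m, ?_⟩
  rw [← span_gamma_fin_eq_span_gamma, finrank_span_eq_card (linearIndependent_gamma m),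
    Fintype.card_fin]
end

section
/- Let f ∈ G correspond to the polynomial F ∈ 𝔽₂[X] with F(0)=1, and let F = g_1^{e_1}···g_t^{e_t} be its factorization into irreducibles. Then for n ∈ ℕ, f fails to be a permutation of 𝔽₂ⁿ if and only if n is a multiple of 2·ord(g_i) for some i. In particular ξ(f) = {2·ord(g_i) : 1 ≤ i ≤ t} is finite and inv(f) is infinite. -/
/-!
Extend `x ∈ 𝔽₂ⁿ` to an `n`-periodic sequence on `ℕ`. The formula for `γ_{2k}` makes sense for
arbitrary sequences, and so does `Φ_P = Σ P_k γ_{2k}` (`combSeq P`). Since `γ_{2l+2}` at an odd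
position `s + 1` annihilates every `γ_{2u}` at `s + 2`, one gets `γ_{2k} ∘ Φ_Q = Φ_{X^k Q}`, hence
`Φ_{PQ} = Φ_P ∘ Φ_Q` whenever `Q(0) = 1`.

On `n`-periodic sequences `γ_{2N}` vanishes for `2N > n` when `n` is odd, and for `n = 2m` the
`γ_{2k}` are `m`-periodic in `k ≥ m`; so `Φ_R = 0` for `R = X^N`, respectively for `R` in the ideal
generated by `X^m (X^m + 1)`. Thus `Φ_F` is invertible as soon as `F Q = 1 + R` for such an `R`,
which for odd `n` always holds and for `n = 2m` holds iff `F` and `X^m + 1` are coprime.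
Conversely, an irreducible common factor `g` yields a nonzero element of the kernel. Finally
`g ∣ X^m + 1 ↔ ord g ∣ m`, because `ord g` is the multiplicative order of `X` modulo `g`.
-/

open Finset Polynomial

/-- The shift-invariant function on 𝔽₂ⁿ attached (for every n) to a binary polynomial F with
F(0) = 1, namely f = Σ_i F_i γ_{2i}. -/
def gammaComb (F : Polynomial (ZMod 2)) (n : ℕ) : (Fin n → ZMod 2) → Fin n → ZMod 2 :=
  fun x => ∑ i ∈ Finset.range (F.natDegree + 1), F.coeff i • gamma n i x

/-- The order of a binary polynomial g with g(0) = 1: the least positive ℓ with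
g dividing X^ℓ + 1. -/
noncomputable def polyOrd (g : Polynomial (ZMod 2)) : ℕ :=
  sInf {ℓ : ℕ | 0 < ℓ ∧ g ∣ (X : Polynomial (ZMod 2)) ^ ℓ + 1}

open Function

lemma zmod_two_mul_self (a : ZMod 2) : a * a = a := by fin_cases a <;> rfl

lemma zmod_two_mul_one_add_self (a : ZMod 2) : a * (1 + a) = 0 := by fin_cases a <;> rfl

lemma mul_prod_one_add_eq_zero {ι : Type*} {s : Finset ι} {f : ι → ZMod 2} {j : ι} (hj : j ∈ s) :
    f j * ∏ i ∈ s, (1 + f i) = 0 := by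
  classical
  rw [← mul_prod_erase _ _ hj, ← mul_assoc, zmod_two_mul_one_add_self, zero_mul]

lemma monic_of_ne_zero_zmod_two {p : (ZMod 2)[X]} (hp : p ≠ 0) : p.Monic := by
  have key : ∀ a : ZMod 2, a ≠ 0 → a = 1 := by decide
  exact key _ (leadingCoeff_ne_zero.2 hp)

section polyOrd

lemma dvd_X_pow_add_one_iff_root_pow_eq_one {g : (ZMod 2)[X]} {m : ℕ} :
    g ∣ X ^ m + 1 ↔ AdjoinRoot.root g ^ m = 1 := by
  rw [← CharTwo.sub_eq_add, ← AdjoinRoot.mk_eq_zero, map_sub, map_pow, AdjoinRoot.mk_X, map_one,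
    sub_eq_zero]

theorem polyOrd_eq_orderOf_root (g : (ZMod 2)[X]) : polyOrd g = orderOf (AdjoinRoot.root g) := by
  simp_rw [polyOrd, dvd_X_pow_add_one_iff_root_pow_eq_one]
  by_cases h : ∃ ℓ, 0 < ℓ ∧ AdjoinRoot.root g ^ ℓ = 1
  · obtain ⟨hpos, hpow⟩ := Nat.sInf_mem h
    refine ((orderOf_eq_iff hpos).2 ⟨hpow, fun m hlt hm hm1 => ?_⟩).symm
    exact Nat.notMem_of_lt_sInf hlt ⟨hm, hm1⟩
  · push Not at h
    rw [orderOf_eq_zero_iff'.2 h, Nat.sInf_eq_zero]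
    exact Or.inr (Set.eq_empty_of_forall_notMem fun ℓ hℓ => h ℓ hℓ.1 hℓ.2)

theorem dvd_X_pow_add_one_iff_polyOrd_dvd {g : (ZMod 2)[X]} {m : ℕ} :
    g ∣ X ^ m + 1 ↔ polyOrd g ∣ m := by
  rw [polyOrd_eq_orderOf_root, orderOf_dvd_iff_pow_eq_one, dvd_X_pow_add_one_iff_root_pow_eq_one]

theorem polyOrd_dvd_polyOrd_of_dvd {g F : (ZMod 2)[X]} (h : g ∣ F) : polyOrd g ∣ polyOrd F :=
  dvd_X_pow_add_one_iff_polyOrd_dvd.1 (h.trans (dvd_X_pow_add_one_iff_polyOrd_dvd.2 dvd_rfl))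

lemma isCoprime_X_of_coeff_zero_eq_one {F : (ZMod 2)[X]} (hF : F.coeff 0 = 1) : IsCoprime X F :=
  (irreducible_X.coprime_iff_not_dvd).2 (by rw [X_dvd_iff, hF]; exact one_ne_zero)

theorem polyOrd_pos {F : (ZMod 2)[X]} (hF : F.coeff 0 = 1) : 0 < polyOrd F := by
  have hF0 : F ≠ 0 := by rintro rfl; simp at hF
  have := (monic_of_ne_zero_zmod_two hF0).finite_adjoinRoot
  have := Module.finite_of_finite (ZMod 2) (M := AdjoinRoot F)
  obtain ⟨u, v, huv⟩ := isCoprime_X_of_coeff_zero_eq_one hF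
  have hunit : IsUnit (AdjoinRoot.root F) := by
    refine IsUnit.of_mul_eq_one_right (AdjoinRoot.mk F u) ?_
    simpa using congrArg (AdjoinRoot.mk F) huv
  rw [polyOrd_eq_orderOf_root, orderOf_pos_iff, ← hunit.unit_spec, Units.isOfFinOrder_val]
  exact isOfFinOrder_of_finite _

end polyOrd

def gammaSeq (k : ℕ) (x : ℕ → ZMod 2) (s : ℕ) : ZMod 2 :=
  x (s + 2 * k) * ∏ j ∈ range k, (1 + x (s + (2 * j + 1)))

noncomputable def combSeq (P : (ZMod 2)[X]) (x : ℕ → ZMod 2) (s : ℕ) : ZMod 2 :=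
  P.sum fun k c => c * gammaSeq k x s

section combSeq

variable (x : ℕ → ZMod 2) (s : ℕ)

@[simp]
lemma gammaSeq_zero : gammaSeq 0 x s = x s := by simp [gammaSeq]

lemma gammaSeq_succ (k : ℕ) :
    gammaSeq (k + 1) x s = (1 + x (s + 1)) * gammaSeq k x (s + 2) := by
  simp only [gammaSeq, prod_range_succ', mul_zero, zero_add]
  rw [show s + 2 * (k + 1) = s + 2 + 2 * k by ring]
  simp only [show ∀ j, s + (2 * (j + 1) + 1) = s + 2 + (2 * j + 1) from fun j => by ring]
  ring

lemma gammaSeq_succ_mul_gammaSeq (l u : ℕ) :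
    gammaSeq (l + 1) x (s + 1) * gammaSeq u x (s + 2) = 0 := by
  rcases lt_or_ge l u with h | h
  · have key := mul_prod_one_add_eq_zero (f := fun j => x (s + 2 + (2 * j + 1))) (mem_range.2 h)
    rw [show s + 2 + (2 * l + 1) = s + 1 + 2 * (l + 1) by ring] at key
    simp only [gammaSeq]
    linear_combination
      (∏ j ∈ range (l + 1), (1 + x (s + 1 + (2 * j + 1)))) * x (s + 2 + 2 * u) * key
  · have key := mul_prod_one_add_eq_zero (f := fun j => x (s + 1 + (2 * j + 1)))
      (mem_range.2 (Nat.lt_succ_of_le h))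
    rw [show s + 1 + (2 * u + 1) = s + 2 + 2 * u by ring] at key
    simp only [gammaSeq]
    linear_combination
      x (s + 1 + 2 * (l + 1)) * (∏ j ∈ range u, (1 + x (s + 2 + (2 * j + 1)))) * key

lemma combSeq_add (P Q : (ZMod 2)[X]) : combSeq (P + Q) x s = combSeq P x s + combSeq Q x s :=
  sum_add_index _ _ _ (fun _ => zero_mul _) fun _ _ _ => add_mul _ _ _

lemma combSeq_smul (c : ZMod 2) (P : (ZMod 2)[X]) : combSeq (c • P) x s = c * combSeq P x s := by
  rw [combSeq, sum_smul_index _ _ _ fun _ => zero_mul _, combSeq, sum_def, sum_def, mul_sum]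
  simp only [mul_assoc]

lemma combSeq_monomial (k : ℕ) (c : ZMod 2) : combSeq (monomial k c) x s = c * gammaSeq k x s :=
  sum_monomial_index _ _ (zero_mul _)

lemma combSeq_C (c : ZMod 2) : combSeq (C c) x s = c * x s := by
  rw [← monomial_zero_left, combSeq_monomial, gammaSeq_zero]

lemma combSeq_X_pow (k : ℕ) : combSeq (X ^ k) x s = gammaSeq k x s := by
  rw [← monomial_one_right_eq_X_pow, combSeq_monomial, one_mul]

lemma combSeq_one : combSeq 1 x s = x s := by
  rw [← C_1, combSeq_C, one_mul]

lemma combSeq_X_mul (P : (ZMod 2)[X]) :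
    combSeq (X * P) x s = (1 + x (s + 1)) * combSeq P x (s + 2) := by
  induction P using Polynomial.induction_on' with
  | add P Q hP hQ => rw [mul_add, combSeq_add, combSeq_add, hP, hQ, mul_add]
  | monomial k c => rw [X_mul_monomial, combSeq_monomial, combSeq_monomial, gammaSeq_succ]; ring

lemma combSeq_X_mul_mul_combSeq (P R : (ZMod 2)[X]) :
    combSeq (X * P) x (s + 1) * combSeq R x (s + 2) = 0 := by
  induction P using Polynomial.induction_on' with
  | add P Q hP hQ => rw [mul_add, combSeq_add, add_mul, hP, hQ, add_zero]
  | monomial l c =>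
    induction R using Polynomial.induction_on' with
    | add R S hR hS => rw [combSeq_add, mul_add, hR, hS, add_zero]
    | monomial u d =>
      rw [X_mul_monomial, combSeq_monomial, combSeq_monomial]
      linear_combination c * d * gammaSeq_succ_mul_gammaSeq x s l u

variable {Q : (ZMod 2)[X]} (hQ : Q.coeff 0 = 1)
include hQ

lemma one_add_combSeq_mul (R : (ZMod 2)[X]) :
    (1 + combSeq Q x (s + 1)) * combSeq R x (s + 2) = (1 + x (s + 1)) * combSeq R x (s + 2) := by
  have hsplit : combSeq Q x (s + 1) = combSeq (X * divX Q) x (s + 1) + x (s + 1) := by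
    conv_lhs => rw [← X_mul_divX_add Q]
    rw [combSeq_add, hQ, combSeq_C, one_mul]
  rw [hsplit]
  linear_combination combSeq_X_mul_mul_combSeq x s (divX Q) R

lemma gammaSeq_combSeq (k : ℕ) : gammaSeq k (combSeq Q x) s = combSeq (X ^ k * Q) x s := by
  induction k generalizing s with
  | zero => rw [gammaSeq_zero, pow_zero, one_mul]
  | succ k ih =>
    rw [gammaSeq_succ, ih, one_add_combSeq_mul x s hQ, pow_succ', mul_assoc, combSeq_X_mul]

theorem combSeq_mul (P : (ZMod 2)[X]) : combSeq (P * Q) x s = combSeq P (combSeq Q x) s := by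
  induction P using Polynomial.induction_on' with
  | add P R hP hR => rw [add_mul, combSeq_add, combSeq_add, hP, hR]
  | monomial k c =>
    rw [← C_mul_X_pow_eq_monomial, mul_assoc, ← smul_eq_C_mul, ← smul_eq_C_mul, combSeq_smul,
      combSeq_smul, combSeq_X_pow, gammaSeq_combSeq x s hQ]

end combSeq

section Periodic

variable {n : ℕ} {x : ℕ → ZMod 2}

lemma Function.Periodic.gammaSeq (hx : Periodic x n) (k : ℕ) : Periodic (gammaSeq k x) n := by
  intro s
  simp only [_root_.gammaSeq, add_right_comm s n, hx _]

lemma Function.Periodic.combSeq (hx : Periodic x n) (P : (ZMod 2)[X]) :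
    Periodic (combSeq P x) n := by
  intro s
  simp only [_root_.combSeq, hx.gammaSeq _ s]

/-- For `n = 2h + 1` the index `j = N - h - 1` has `2j + 1 ≡ 2N [MOD n]`, so the leading factor
`x (s + 2N)` meets its complement `1 + x (s + 2j + 1)` in the product. -/
lemma gammaSeq_eq_zero_of_odd_period (hx : Periodic x n) (hn : Odd n) {N : ℕ} (hN : n < 2 * N)
    (s : ℕ) : gammaSeq N x s = 0 := by
  obtain ⟨h, rfl⟩ := hn
  have key := mul_prod_one_add_eq_zero (f := fun j => x (s + (2 * j + 1)))
    (mem_range.2 (show N - h - 1 < N by omega))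
  rwa [← hx, show s + (2 * (N - h - 1) + 1) + (2 * h + 1) = s + 2 * N by omega] at key

lemma prod_range_add_add_of_periodic {m : ℕ} {f : ℕ → ZMod 2} (hf : Periodic f m) (b : ℕ) :
    ∏ j ∈ range (b + m + m), f j = ∏ j ∈ range (b + m), f j := by
  have hblock : ∏ i ∈ range m, f (b + m + i) = ∏ i ∈ range m, f (b + i) :=
    prod_congr rfl fun i _ => by rw [add_right_comm, hf]
  rw [prod_range_add (n := b + m), hblock, prod_range_add, mul_assoc, zmod_two_mul_self]

lemma gammaSeq_add_of_even_period {m k : ℕ} (hx : Periodic x (2 * m)) (hk : m ≤ k) :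
    gammaSeq (k + m) x = gammaSeq k x := by
  obtain ⟨b, rfl⟩ := Nat.exists_eq_add_of_le' hk
  funext s
  have hf : Periodic (fun j => 1 + x (s + (2 * j + 1))) m := fun j => by
    simp only [show s + (2 * (j + m) + 1) = s + (2 * j + 1) + 2 * m by ring, hx _]
  rw [gammaSeq, gammaSeq, prod_range_add_add_of_periodic hf,
    show s + 2 * (b + m + m) = s + 2 * (b + m) + 2 * m by ring, hx]

lemma combSeq_eq_zero_of_even_period {m : ℕ} (hx : Periodic x (2 * m)) (v : (ZMod 2)[X]) :
    combSeq (X ^ m * (X ^ m + 1) * v) x = 0 := by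
  induction v using Polynomial.induction_on' with
  | add v w hv hw => funext s; rw [mul_add, combSeq_add, hv, hw, Pi.zero_apply, add_zero]
  | monomial t c =>
    funext s
    have hsplit : X ^ m * (X ^ m + 1) * monomial t c = c • (X ^ (t + m + m) + X ^ (t + m)) := by
      rw [← C_mul_X_pow_eq_monomial, smul_eq_C_mul]; ring
    rw [hsplit, combSeq_smul, combSeq_add, combSeq_X_pow, combSeq_X_pow,
      gammaSeq_add_of_even_period hx (Nat.le_add_left m t), CharTwo.add_self_eq_zero, mul_zero,
      Pi.zero_apply]

end Periodic

section periodicExt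

variable {n : ℕ} [NeZero n]

def periodicExt (x : Fin n → ZMod 2) (t : ℕ) : ZMod 2 := x (Fin.ofNat n t)

lemma periodicExt_periodic (x : Fin n → ZMod 2) : Periodic (periodicExt x) n := fun t =>
  congrArg x (Fin.ext (by simp only [Fin.val_ofNat, Nat.add_mod_right]))

@[simp]
lemma periodicExt_val (x : Fin n → ZMod 2) (i : Fin n) : periodicExt x i = x i := by
  simp [periodicExt]

lemma periodicExt_cshift_iterate (x : Fin n → ZMod 2) (t s : ℕ) :
    periodicExt ((cshift n)^[t] x) s = periodicExt x (s + t) := by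
  induction t generalizing x s with
  | zero => rfl
  | succ t ih =>
    rw [iterate_succ_apply, ih, ← add_assoc]
    exact congrArg x (Fin.ext (by simp [Nat.add_mod]))

lemma gamma_apply_s13 (k : ℕ) (x : Fin n → ZMod 2) (i : Fin n) :
    gamma n k x i = gammaSeq k (periodicExt x) i := by
  simp only [gamma, gammaSeq, ← periodicExt_cshift_iterate, periodicExt_val]

lemma gammaComb_apply (F : (ZMod 2)[X]) (x : Fin n → ZMod 2) (i : Fin n) :
    gammaComb F n x i = combSeq F (periodicExt x) i := by
  rw [gammaComb, combSeq, sum_over_range _ fun _ => zero_mul _, Finset.sum_apply]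
  simp only [Pi.smul_apply, smul_eq_mul, gamma_apply_s13]

lemma periodicExt_gammaComb (F : (ZMod 2)[X]) (x : Fin n → ZMod 2) :
    periodicExt (gammaComb F n x) = combSeq F (periodicExt x) := by
  funext t
  rw [periodicExt, gammaComb_apply, Fin.val_ofNat, ((periodicExt_periodic x).combSeq F).map_mod_nat]

end periodicExt

section Bijective

variable {F : (ZMod 2)[X]} (hF : F.coeff 0 = 1)
include hF

theorem gammaComb_bijective_of_mul_eq {n : ℕ} [NeZero n] {Q R : (ZMod 2)[X]} (hFQ : F * Q = 1 + R)
    (hR0 : R.coeff 0 = 0) (hR : ∀ y : ℕ → ZMod 2, Periodic y n → combSeq R y = 0) :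
    Bijective (gammaComb F n) := by
  have hQ : Q.coeff 0 = 1 := by
    simpa [mul_coeff_zero, hF, hR0] using congrArg (coeff · 0) hFQ
  refine Surjective.bijective_of_finite fun y => ⟨gammaComb Q n y, funext fun i => ?_⟩
  rw [gammaComb_apply, periodicExt_gammaComb, ← combSeq_mul _ _ hQ, hFQ, combSeq_add, combSeq_one,
    hR _ (periodicExt_periodic y), Pi.zero_apply, add_zero, periodicExt_val]

theorem gammaComb_bijective_of_odd {n : ℕ} (hn : Odd n) : Bijective (gammaComb F n) := by
  have : NeZero n := ⟨hn.pos.ne'⟩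
  have hN : n < 2 * (polyOrd F * n) := by nlinarith [polyOrd_pos hF, hn.pos]
  obtain ⟨Q, hQ⟩ := dvd_X_pow_add_one_iff_polyOrd_dvd.2 (dvd_mul_right (polyOrd F) n)
  refine gammaComb_bijective_of_mul_eq hF (R := X ^ (polyOrd F * n)) (hQ.symm.trans (add_comm _ _))
    (by rw [coeff_X_pow]; exact if_neg (by omega)) fun y hy => ?_
  funext s
  rw [combSeq_X_pow, gammaSeq_eq_zero_of_odd_period hy hn hN, Pi.zero_apply]

theorem gammaComb_bijective_of_isCoprime {m : ℕ} [NeZero m] (hcop : IsCoprime F (X ^ m + 1)) :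
    Bijective (gammaComb F (2 * m)) := by
  obtain ⟨u, v, huv⟩ :=
    ((isCoprime_X_of_coeff_zero_eq_one hF).symm.pow_right (n := m)).mul_right hcop
  refine gammaComb_bijective_of_mul_eq hF (Q := u) (R := X ^ m * (X ^ m + 1) * v)
    (by linear_combination huv - X ^ m * (X ^ m + 1) * v * CharTwo.two_eq_zero (R := (ZMod 2)[X]))
    (by simp [mul_coeff_zero, (NeZero.ne m).symm]) fun y hy => combSeq_eq_zero_of_even_period hy v

end Bijective

section Kernel

def evenSpread (a : ℕ → ZMod 2) (t : ℕ) : ZMod 2 := if Even t then a (t / 2) else 0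

variable {a : ℕ → ZMod 2}

lemma Function.Periodic.evenSpread {m : ℕ} (ha : Periodic a m) : Periodic (evenSpread a) (2 * m) :=
  fun t => by
    simp only [_root_.evenSpread, Nat.even_add, even_two_mul, iff_true,
      show (t + 2 * m) / 2 = t / 2 + m by omega, ha _]

lemma gammaSeq_evenSpread_two_mul (k u : ℕ) : gammaSeq k (evenSpread a) (2 * u) = a (u + k) := by
  have hodd : ∀ j, evenSpread a (2 * u + (2 * j + 1)) = 0 := fun j => by
    simp [evenSpread, show 2 * u + (2 * j + 1) = 2 * (u + j) + 1 by ring]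
  rw [gammaSeq, prod_eq_one fun j _ => by rw [hodd, add_zero], mul_one, ← mul_add]
  simp [evenSpread]

lemma gammaSeq_evenSpread_two_mul_add_one (k u : ℕ) :
    gammaSeq k (evenSpread a) (2 * u + 1) = 0 := by
  simp [gammaSeq, evenSpread, show 2 * u + 1 + 2 * k = 2 * (u + k) + 1 by ring]

lemma combSeq_evenSpread_two_mul (ℓ : (ZMod 2)[X] →ₗ[ZMod 2] ZMod 2) (P : (ZMod 2)[X]) (u : ℕ) :
    combSeq P (evenSpread fun t => ℓ (X ^ t)) (2 * u) = ℓ (X ^ u * P) := by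
  induction P using Polynomial.induction_on' with
  | add P Q hP hQ => rw [combSeq_add, hP, hQ, mul_add, map_add]
  | monomial k c =>
    rw [combSeq_monomial, gammaSeq_evenSpread_two_mul, ← C_mul_X_pow_eq_monomial, ← smul_eq_C_mul,
      mul_smul_comm, map_smul, smul_eq_mul, pow_add]

lemma combSeq_evenSpread_two_mul_add_one (P : (ZMod 2)[X]) (u : ℕ) :
    combSeq P (evenSpread a) (2 * u + 1) = 0 := by
  simp [combSeq, gammaSeq_evenSpread_two_mul_add_one, Polynomial.sum_def]

/-- The sequence `t ↦ (X ^ t %ₘ g).coeff 0` is `m`-periodic, starts with `1`, and satisfies the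
linear recurrence of `F`; spread onto the even positions it is a nonzero kernel element of `Φ_F`. -/
theorem not_injective_gammaComb {m : ℕ} [NeZero m] {F g : (ZMod 2)[X]} (hg : 0 < g.natDegree)
    (hgF : g ∣ F) (hgm : g ∣ X ^ m + 1) : ¬Injective (gammaComb F (2 * m)) := by
  have hmonic : g.Monic := monic_of_ne_zero_zmod_two (ne_zero_of_natDegree_gt hg)
  set ℓ := (lcoeff (ZMod 2) 0).comp (modByMonicHom g)
  have hℓ : ∀ p, g ∣ p → ℓ p = 0 := fun p hp => by
    simp [ℓ, (modByMonic_eq_zero_iff_dvd hmonic).2 hp]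
  set y := evenSpread fun t => ℓ (X ^ t)
  have hy : Periodic y (2 * m) := Periodic.evenSpread fun t => by
    rw [← CharTwo.add_eq_zero, ← map_add, pow_add, ← mul_add_one]
    exact hℓ _ (dvd_mul_of_dvd_right hgm _)
  have hy0 : y 0 = 1 := by
    have h1 : (1 : (ZMod 2)[X]) %ₘ g = 1 :=
      (modByMonic_eq_self_iff hmonic).2 (by rwa [degree_one, ← natDegree_pos_iff_degree_pos])
    simp [y, evenSpread, ℓ, h1]
  have hker : combSeq F y = 0 := funext fun s => by
    obtain ⟨u, rfl | rfl⟩ := Nat.even_or_odd' s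
    · rw [combSeq_evenSpread_two_mul, hℓ _ (dvd_mul_of_dvd_right hgF _), Pi.zero_apply]
    · exact combSeq_evenSpread_two_mul_add_one F u
  have hzero : combSeq F (0 : ℕ → ZMod 2) = 0 := funext fun s => by
    simp [combSeq, gammaSeq, Polynomial.sum_def]
  set x : Fin (2 * m) → ZMod 2 := fun i => y i
  have hx : periodicExt x = y := funext fun t => by
    simp only [x, periodicExt, Fin.val_ofNat, hy.map_mod_nat]
  intro hinj
  have hx0 : x = 0 := hinj <| funext fun i => by
    rw [gammaComb_apply, gammaComb_apply, hx, hker]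
    exact (congrFun hzero i).symm
  simpa [x, hy0] using congrFun hx0 0

end Kernel

lemma not_isCoprime_iff_exists_irreducible_dvd {R : Type*} [CommRing R] [IsDomain R]
    [IsPrincipalIdealRing R] {a b : R} (ha : a ≠ 0) :
    ¬IsCoprime a b ↔ ∃ p, Irreducible p ∧ p ∣ a ∧ p ∣ b := by
  refine ⟨fun h => ?_, fun ⟨p, hp, hpa, hpb⟩ hab => hp.not_isUnit (hab.isUnit_of_dvd' hpa hpb)⟩
  by_contra! hno
  exact h (isCoprime_of_irreducible_dvd (fun h0 => ha h0.1) hno)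

theorem gammaComb_bijective_iff_isCoprime {m : ℕ} [NeZero m] {F : (ZMod 2)[X]}
    (hF : F.coeff 0 = 1) :
    Bijective (gammaComb F (2 * m)) ↔ IsCoprime F (X ^ m + 1) := by
  refine ⟨fun hbij => ?_, gammaComb_bijective_of_isCoprime hF⟩
  by_contra hcop
  obtain ⟨g, hg, hgF, hgm⟩ :=
    (not_isCoprime_iff_exists_irreducible_dvd (by rintro rfl; simp at hF)).1 hcop
  exact not_injective_gammaComb hg.natDegree_pos hgF hgm hbij.injective

theorem stmt_13 (F : Polynomial (ZMod 2)) (hF : F.coeff 0 = 1) :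
    (∀ n : ℕ, 0 < n →
      (¬ Function.Bijective (gammaComb F n) ↔
        ∃ g : Polynomial (ZMod 2), Irreducible g ∧ g ∣ F ∧ (2 * polyOrd g) ∣ n)) ∧
    Set.Finite {m : ℕ | ∃ g : Polynomial (ZMod 2), Irreducible g ∧ g ∣ F ∧ m = 2 * polyOrd g} ∧
    Set.Infinite {n : ℕ | 0 < n ∧ Function.Bijective (gammaComb F n)} := by
  refine ⟨fun n hn => ?_, ?_, ?_⟩
  · obtain ⟨m, rfl | rfl⟩ := Nat.even_or_odd' n
    · have : NeZero m := ⟨by omega⟩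
      simp_rw [gammaComb_bijective_iff_isCoprime hF, Nat.mul_dvd_mul_iff_left two_pos,
        ← dvd_X_pow_add_one_iff_polyOrd_dvd]
      exact not_isCoprime_iff_exists_irreducible_dvd (by rintro rfl; simp at hF)
    · simp only [gammaComb_bijective_of_odd hF (odd_two_mul_add_one m), not_true_eq_false,
        false_iff, not_exists, not_and]
      exact fun g _ _ h => (odd_two_mul_add_one m).not_two_dvd_nat ((dvd_mul_right 2 _).trans h)
  · refine (Set.finite_Iic (2 * polyOrd F)).subset ?_
    rintro _ ⟨g, -, hgF, rfl⟩
    exact Nat.mul_le_mul_left 2 (Nat.le_of_dvd (polyOrd_pos hF) (polyOrd_dvd_polyOrd_of_dvd hgF))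
  · refine Set.infinite_of_injective_forall_mem (f := fun k => 2 * k + 1)
      (fun a b h => by simpa using h)
      fun k => ⟨Nat.succ_pos _, gammaComb_bijective_of_odd hF (odd_two_mul_add_one k)⟩
end

section
/- Let n ≥ 2 be even and not a multiple of 6. In 𝔽₂[X]/(Xⁿ + X^{n/2}), the inverse of [1 + X + X²] is [1 + X·P_{3k}(X) + X²·P_{6k}(X)] if n = 6k+2, and [1 + X²·P_{3k}(X) + X·P_{6k+3}(X)] if n = 6k+4, where P_0 = 0 and P_{3j}(X) = (1+X^{3j})/(1+X+X²). -/
open Polynomial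

/-- P_{3k}(X) = (1+X)(1 + X³ + … + X^{3(k-1)}) over 𝔽₂, with P_0 = 0. -/
noncomputable def Ppoly (k : ℕ) : Polynomial (ZMod 2) :=
  (1 + X) * ∑ j ∈ Finset.range k, X ^ (3 * j)

theorem Ideal.Quotient.mk_mul_mk_eq_one_of_mul_eq_one_add {R : Type*} [CommRing R] {f a b : R}
    (h : a * b = 1 + f) :
    Ideal.Quotient.mk (Ideal.span {f}) a * Ideal.Quotient.mk (Ideal.span {f}) b = 1 := by
  rw [← map_mul, ← map_one (Ideal.Quotient.mk _), Ideal.Quotient.mk_eq_mk_iff_sub_mem, h,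
    add_sub_cancel_left]
  exact Ideal.mem_span_singleton_self f

-- In characteristic 2, (1 + X + X²)(1 + X) = X³ - 1, against which the geometric sum telescopes.
theorem one_add_X_add_X_sq_mul_Ppoly (j : ℕ) :
    (1 + X + X ^ 2 : (ZMod 2)[X]) * Ppoly j = 1 + X ^ (3 * j) := by
  have hgeom := geom_sum_mul (X ^ 3 : (ZMod 2)[X]) j
  simp only [← pow_mul] at hgeom
  rw [Ppoly]
  linear_combination hgeom + ((∑ i ∈ Finset.range j, (X : (ZMod 2)[X]) ^ (3 * i))
      * (1 + X + X ^ 2) - 1) * CharTwo.two_eq_zero (R := (ZMod 2)[X])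

theorem one_add_X_add_X_sq_mul_inverse_six_mul_add_two (k : ℕ) :
    (1 + X + X ^ 2 : (ZMod 2)[X]) * (1 + X * Ppoly k + X ^ 2 * Ppoly (2 * k)) =
      1 + (X ^ (6 * k + 2) + X ^ (3 * k + 1)) := by
  linear_combination X * one_add_X_add_X_sq_mul_Ppoly k +
    X ^ 2 * one_add_X_add_X_sq_mul_Ppoly (2 * k)
      + (X + X ^ 2) * CharTwo.two_eq_zero (R := (ZMod 2)[X])

theorem one_add_X_add_X_sq_mul_inverse_six_mul_add_four (k : ℕ) :
    (1 + X + X ^ 2 : (ZMod 2)[X]) * (1 + X ^ 2 * Ppoly k + X * Ppoly (2 * k + 1)) =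
      1 + (X ^ (6 * k + 4) + X ^ (3 * k + 2)) := by
  linear_combination X ^ 2 * one_add_X_add_X_sq_mul_Ppoly k +
    X * one_add_X_add_X_sq_mul_Ppoly (2 * k + 1)
      + (X + X ^ 2) * CharTwo.two_eq_zero (R := (ZMod 2)[X])

theorem stmt_19_general (n : ℕ) :
    (∀ k : ℕ, n = 6 * k + 2 →
      Ideal.Quotient.mk (Ideal.span {(X : Polynomial (ZMod 2)) ^ n + X ^ (n / 2)})
          (1 + X + X ^ 2) *
        Ideal.Quotient.mk (Ideal.span {(X : Polynomial (ZMod 2)) ^ n + X ^ (n / 2)})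
          (1 + X * Ppoly k + X ^ 2 * Ppoly (2 * k)) = 1) ∧
    (∀ k : ℕ, n = 6 * k + 4 →
      Ideal.Quotient.mk (Ideal.span {(X : Polynomial (ZMod 2)) ^ n + X ^ (n / 2)})
          (1 + X + X ^ 2) *
        Ideal.Quotient.mk (Ideal.span {(X : Polynomial (ZMod 2)) ^ n + X ^ (n / 2)})
          (1 + X ^ 2 * Ppoly k + X * Ppoly (2 * k + 1)) = 1) := by
  constructor
  · rintro k rfl
    rw [show (6 * k + 2) / 2 = 3 * k + 1 by omega]
    exact Ideal.Quotient.mk_mul_mk_eq_one_of_mul_eq_one_add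
      (one_add_X_add_X_sq_mul_inverse_six_mul_add_two k)
  · rintro k rfl
    rw [show (6 * k + 4) / 2 = 3 * k + 2 by omega]
    exact Ideal.Quotient.mk_mul_mk_eq_one_of_mul_eq_one_add
      (one_add_X_add_X_sq_mul_inverse_six_mul_add_four k)

theorem stmt_19 (n : ℕ) (hn : 2 ≤ n) (heven : Even n) (h6 : ¬ (6 ∣ n)) :
    (∀ k : ℕ, n = 6 * k + 2 →
      Ideal.Quotient.mk (Ideal.span {(X : Polynomial (ZMod 2)) ^ n + X ^ (n / 2)})
          (1 + X + X ^ 2) *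
        Ideal.Quotient.mk (Ideal.span {(X : Polynomial (ZMod 2)) ^ n + X ^ (n / 2)})
          (1 + X * Ppoly k + X ^ 2 * Ppoly (2 * k)) = 1) ∧
    (∀ k : ℕ, n = 6 * k + 4 →
      Ideal.Quotient.mk (Ideal.span {(X : Polynomial (ZMod 2)) ^ n + X ^ (n / 2)})
          (1 + X + X ^ 2) *
        Ideal.Quotient.mk (Ideal.span {(X : Polynomial (ZMod 2)) ^ n + X ^ (n / 2)})
          (1 + X ^ 2 * Ppoly k + X * Ppoly (2 * k + 1)) = 1) :=
  stmt_19_general n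
end
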